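/- arXiv:2511.04391 — 2 statements merged into one kernel-verified Lean document; each statement's English description precedes it below -/
import Mathlib

section
/- Let A be a C*-algebra, 𝒜 ⊆ A a dense *-subalgebra, and I_1, …, I_n ⊆ A closed two-sided ideals such that I_j ∩ 𝒜 is dense in I_j for each j = 1, …, n. Then (⋂_{j=1}^n I_j) ∩ 𝒜 is dense in ⋂_{j=1}^n I_j. -/
/-!
Let `x ∈ I ∩ J`. For `r > 0` put `g t = t² / (t² + r²)`; since `g t = t * h t` with `h 0 = 0`,
`e = g(x⋆x) = x⋆x * h(x⋆x)` lies in `J`. By the C⋆-identity `‖x e - x‖² = ‖f(x⋆x)‖` with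
`f t = t (1 - g t)²`, and `|f| ≤ r / 2`, so `x` is a limit of such products `x e`. Approximating
`x` from `I ∩ 𝒜` and `e` from `J ∩ 𝒜` approximates `x e` by elements of `I ∩ J ∩ 𝒜`; induction
on the number of ideals does the rest.
-/

lemma abs_mul_one_sub_div_sq_le (t : ℝ) {r : ℝ} (hr : 0 < r) :
    |t * (1 - t ^ 2 / (t ^ 2 + r ^ 2)) ^ 2| ≤ r / 2 := by
  have hd : 0 < t ^ 2 + r ^ 2 := by positivity
  have h1 : 1 - t ^ 2 / (t ^ 2 + r ^ 2) = r ^ 2 / (t ^ 2 + r ^ 2) := by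
    field_simp; ring
  have amgm : 2 * |t| * r ≤ t ^ 2 + r ^ 2 := by
    nlinarith [sq_nonneg (|t| - r), sq_abs t]
  rw [h1, abs_mul, abs_pow, abs_div, abs_of_pos hd, abs_of_pos (by positivity : 0 < r ^ 2),
    div_pow, mul_div_assoc', div_le_div_iff₀ (by positivity) two_pos]
  calc |t| * (r ^ 2) ^ 2 * 2 = (2 * |t| * r) * r ^ 2 * r := by ring
    _ ≤ (t ^ 2 + r ^ 2) * (t ^ 2 + r ^ 2) * r := by gcongr; nlinarith
    _ = r * (t ^ 2 + r ^ 2) ^ 2 := by ring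

lemma TwoSidedIdeal.coe_iInf {R ι : Type*} [NonUnitalNonAssocRing R] (I : ι → TwoSidedIdeal R) :
    ((⨅ i, I i : TwoSidedIdeal R) : Set R) = ⋂ i, (I i : Set R) :=
  Set.ext fun _ ↦ (TwoSidedIdeal.mem_iInf _).trans Set.mem_iInter.symm

section CStar

variable {A : Type*} [NonUnitalCStarAlgebra A]

lemma cfcₙ_mul_one_sub_sq {a : A} (ha : IsSelfAdjoint a) {g : ℝ → ℝ} (hg : Continuous g)
    (hg0 : g 0 = 0) :
    cfcₙ (fun t ↦ t * (1 - g t) ^ 2) a =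
      cfcₙ g a * a * cfcₙ g a - cfcₙ g a * a - a * cfcₙ g a + a := by
  have hfun : (fun t ↦ t * (1 - g t) ^ 2) = fun t ↦ g t * t * g t - g t * t - t * g t + t := by
    ext t; ring
  rw [hfun, cfcₙ_add _ (fun t ↦ t) a, cfcₙ_sub _ (fun t ↦ t * g t) a,
    cfcₙ_sub (fun t ↦ g t * t * g t) (fun t ↦ g t * t) a, cfcₙ_mul (fun t ↦ g t * t) g a,
    cfcₙ_mul g (fun t ↦ t) a, cfcₙ_mul (fun t ↦ t) g a, cfcₙ_id' ℝ a]

lemma norm_mul_cfcₙ_sub_self_sq (x : A) {g : ℝ → ℝ} (hg : Continuous g) (hg0 : g 0 = 0) :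
    ‖x * cfcₙ g (star x * x) - x‖ ^ 2 = ‖cfcₙ (fun t ↦ t * (1 - g t) ^ 2) (star x * x)‖ := by
  have he : IsSelfAdjoint (cfcₙ g (star x * x)) := cfcₙ_predicate g _
  rw [sq, ← CStarRing.norm_star_mul_self, cfcₙ_mul_one_sub_sq (.star_mul_self x) hg hg0]
  congr 1
  simp only [star_sub, star_mul, he.star_eq]
  noncomm_ring

lemma mem_closure_range_mul_star_mul_self_mul (x : A) :
    x ∈ closure (Set.range fun c ↦ x * (star x * x * c)) := by
  rw [Metric.mem_closure_iff]
  intro ε hε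
  set a := star x * x
  have hr : 0 < ε ^ 2 := by positivity
  set g : ℝ → ℝ := fun t ↦ t ^ 2 / (t ^ 2 + (ε ^ 2) ^ 2)
  set h : ℝ → ℝ := fun t ↦ t / (t ^ 2 + (ε ^ 2) ^ 2)
  set c := cfcₙ h a
  have hg : Continuous g := Continuous.div (by fun_prop) (by fun_prop) fun t ↦ by positivity
  have hh : Continuous h := Continuous.div (by fun_prop) (by fun_prop) fun t ↦ by positivity
  have hac : a * c = cfcₙ g a := by
    calc a * c = cfcₙ (fun t : ℝ ↦ t) a * c := by rw [cfcₙ_id' ℝ a]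
      _ = cfcₙ g a := by
        rw [← cfcₙ_mul (fun t ↦ t) h a (hg0 := by simp [h])]
        congr 1; ext t; ring
  refine ⟨_, ⟨c, rfl⟩, ?_⟩
  have hsq : ‖x * cfcₙ g a - x‖ ^ 2 < ε ^ 2 := by
    rw [norm_mul_cfcₙ_sub_self_sq x hg (by simp [g])]
    refine (norm_cfcₙ_le fun t _ ↦ abs_mul_one_sub_div_sq_le t hr).trans_lt (by linarith)
  rw [dist_comm, dist_eq_norm]
  show ‖x * (a * c) - x‖ < ε
  rw [hac]
  exact lt_of_pow_lt_pow_left₀ 2 hε.le hsq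

variable {S : Type*} [SetLike S A] [MulMemClass S A]

lemma closure_inf_inter_eq (s : S) {I J : TwoSidedIdeal A}
    (hI : closure ((I : Set A) ∩ s) = I) (hJ : closure ((J : Set A) ∩ s) = J) :
    closure (((I ⊓ J : TwoSidedIdeal A) : Set A) ∩ s) = (I ⊓ J : TwoSidedIdeal A) := by
  refine (closure_minimal Set.inter_subset_left ?_).antisymm ?_
  · have hIc : IsClosed (I : Set A) := hI ▸ isClosed_closure
    have hJc : IsClosed (J : Set A) := hJ ▸ isClosed_closure
    exact hIc.inter hJc
  intro x hx
  obtain ⟨hxI, hxJ⟩ := (TwoSidedIdeal.mem_inf _).mp hx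
  refine closure_minimal ?_ isClosed_closure (mem_closure_range_mul_star_mul_self_mul x)
  rintro _ ⟨c, rfl⟩
  have heJ : star x * x * c ∈ J := J.mul_mem_right _ _ (J.mul_mem_left _ _ hxJ)
  have hx : x ∈ closure ((I : Set A) ∩ s) := by rwa [hI]
  have he : star x * x * c ∈ closure ((J : Set A) ∩ s) := by rwa [hJ]
  refine map_mem_closure₂ continuous_mul hx he ?_
  exact fun a ha b hb ↦ ⟨⟨I.mul_mem_right _ _ ha.1, J.mul_mem_left _ _ hb.1⟩, mul_mem ha.2 hb.2⟩

theorem closure_iInf_inter_eq {ι : Type*} [Finite ι] (s : S) (hs : Dense (s : Set A))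
    (I : ι → TwoSidedIdeal A) (hI : ∀ i, closure ((I i : Set A) ∩ s) = I i) :
    closure (((⨅ i, I i : TwoSidedIdeal A) : Set A) ∩ s) = (⨅ i, I i : TwoSidedIdeal A) := by
  induction ι using Finite.induction_empty_option with
  | of_equiv e h =>
    rw [← e.iInf_comp]
    exact h (I ∘ e) fun i ↦ hI (e i)
  | h_empty =>
    rw [iInf_of_empty, TwoSidedIdeal.coe_top, Set.univ_inter, hs.closure_eq]
  | h_option ih =>
    rw [iInf_option]
    exact closure_inf_inter_eq s (hI none) (ih _ fun i ↦ hI (some i))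

end CStar

theorem stmt2_general {A : Type*} [NonUnitalCStarAlgebra A]
    (𝒜 : NonUnitalStarSubalgebra ℂ A) (h𝒜 : Dense (𝒜 : Set A))
    (n : ℕ) (I : Fin n → TwoSidedIdeal A)
    (hdense : ∀ j, closure ((I j : Set A) ∩ (𝒜 : Set A)) = (I j : Set A)) :
    closure ((⋂ j, (I j : Set A)) ∩ (𝒜 : Set A)) = ⋂ j, (I j : Set A) := by
  simpa only [TwoSidedIdeal.coe_iInf] using closure_iInf_inter_eq 𝒜 h𝒜 I hdense

/-- Let `A` be a C*-algebra, `𝒜 ⊆ A` a dense *-subalgebra, and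
`I 1, …, I n ⊆ A` closed two-sided ideals such that `I j ∩ 𝒜` is dense in `I j` for each `j`.
Then `(⋂ j, I j) ∩ 𝒜` is dense in `⋂ j, I j`. -/
theorem stmt2 {A : Type*} [NonUnitalCStarAlgebra A] [StarModule ℂ A]
    (𝒜 : NonUnitalStarSubalgebra ℂ A) (h𝒜 : Dense (𝒜 : Set A))
    (n : ℕ) (I : Fin n → TwoSidedIdeal A)
    (hIc : ∀ j, IsClosed ((I j : Set A)))
    (hdense : ∀ j, closure ((I j : Set A) ∩ (𝒜 : Set A)) = (I j : Set A)) :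
    closure ((⋂ j, (I j : Set A)) ∩ (𝒜 : Set A)) = ⋂ j, (I j : Set A) :=
  stmt2_general 𝒜 h𝒜 n I hdense
end

section
/- Let Γ be a group and let 𝒳 be a Chabauty-closed set of subgroups of Γ. Then for every X ∈ 𝒳 there exists Y ∈ 𝒳 with Y ≤ X such that Y is minimal in 𝒳, i.e. whenever Y' ∈ 𝒳 and Y' ≤ Y one has Y' = Y. -/
/-!
By Zorn's lemma it suffices that the intersection of every nonempty chain in `𝒳` lies in `𝒳`.
Along the chain, taken downwards, the characteristic functions converge pointwise to that of
the intersection: an element outside the intersection misses some member of the chain, hence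
every smaller one. Since `𝒳` is closed, the limit lies in `𝒳`.
-/

/-- The characteristic function of a subgroup, viewed as an element of the product space
`G → Bool` (with `Bool` discrete and `G → Bool` carrying the product topology).  The Chabauty
topology on the set of subgroups of `G` is the subspace topology under `H ↦ chi H`. -/
noncomputable def chi {G : Type*} [Group G] (H : Subgroup G) : G → Bool :=
  fun g => @decide (g ∈ H) (Classical.propDecidable _)

open Filter Topology

theorem zorn_ge_nonempty₀ {α : Type*} [Preorder α] (s : Set α)
    (ih : ∀ c ⊆ s, IsChain (· ≤ ·) c → ∀ y ∈ c, ∃ lb ∈ s, ∀ z ∈ c, lb ≤ z) (x : α) (hxs : x ∈ s) :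
    ∃ m, m ≤ x ∧ Minimal (· ∈ s) m := by
  obtain ⟨m, hxm, hm⟩ := zorn_le_nonempty₀ (α := αᵒᵈ) (OrderDual.ofDual ⁻¹' s)
    (fun c hcs hc y hy => ih (OrderDual.toDual ⁻¹' c) hcs hc.symm y hy)
    (OrderDual.toDual x) hxs
  exact ⟨OrderDual.ofDual m, hxm, maximal_toDual.mp hm⟩

section Chabauty

variable {G : Type*} [Group G]

@[simp]
lemma chi_eq_true_iff (H : Subgroup G) (g : G) : chi H g = true ↔ g ∈ H := by
  simp [chi]

lemma chi_injective : Function.Injective (chi (G := G)) := fun H K h =>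
  Subgroup.ext fun g => by rw [← chi_eq_true_iff, ← chi_eq_true_iff, h]

lemma tendsto_chi_atBot_sInf (c : Set (Subgroup G)) :
    Tendsto (fun Y : c => chi (Y : Subgroup G)) atBot (𝓝 (chi (sInf c))) := by
  refine tendsto_pi_nhds.mpr fun g => ?_
  rw [nhds_discrete, tendsto_pure]
  by_cases hg : g ∈ sInf c
  · exact .of_forall fun Y => Bool.eq_iff_iff.mpr <| by
      simpa only [chi_eq_true_iff] using iff_of_true (Subgroup.mem_sInf.mp hg Y Y.2) hg
  · obtain ⟨Z, hZ, hgZ⟩ : ∃ Z ∈ c, g ∉ Z := by simpa [Subgroup.mem_sInf] using hg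
    filter_upwards [mem_atBot (⟨Z, hZ⟩ : c)] with Y hYZ
    exact Bool.eq_iff_iff.mpr <| by
      simpa only [chi_eq_true_iff] using iff_of_false (fun hgY => hgZ (hYZ hgY)) hg

lemma sInf_mem_of_isClosed_image_chi {𝒳 : Set (Subgroup G)} (h𝒳 : IsClosed (chi '' 𝒳))
    {c : Set (Subgroup G)} (hc𝒳 : c ⊆ 𝒳) (hc : DirectedOn (· ≥ ·) c) (hne : c.Nonempty) :
    sInf c ∈ 𝒳 := by
  have := hc.isCodirectedOrder
  have := hne.to_subtype
  have hmem : chi (sInf c) ∈ closure (chi '' 𝒳) :=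
    mem_closure_of_tendsto (tendsto_chi_atBot_sInf c) (.of_forall fun Y => ⟨Y, hc𝒳 Y.2, rfl⟩)
  obtain ⟨Y, hY, hYc⟩ := h𝒳.closure_eq ▸ hmem
  exact chi_injective hYc ▸ hY

end Chabauty

/-- Let `Γ` be a group and `𝒳` a Chabauty-closed set of subgroups of `Γ`.
Then every `X ∈ 𝒳` contains some `Y ∈ 𝒳` that is minimal in `𝒳`. -/
theorem stmt5 {Γ : Type*} [Group Γ] (𝒳 : Set (Subgroup Γ))
    (hX : IsClosed (chi '' 𝒳)) :
    ∀ X ∈ 𝒳, ∃ Y ∈ 𝒳, Y ≤ X ∧ ∀ Y' ∈ 𝒳, Y' ≤ Y → Y' = Y := by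
  intro X hX𝒳
  obtain ⟨Y, hYX, hY⟩ := zorn_ge_nonempty₀ 𝒳 (fun c hc𝒳 hc y hy =>
    ⟨sInf c, sInf_mem_of_isClosed_image_chi hX hc𝒳
      (IsChain.directedOn (r := (· ≥ ·)) hc.symm) ⟨y, hy⟩, fun _ => sInf_le⟩) X hX𝒳
  exact ⟨Y, hY.prop, hYX, fun Y' hY' hY'Y => hY.eq_of_le hY' hY'Y⟩
end
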